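/- Hardy–Littlewood inequality: for nonnegative measurable functions f and g on a finite measure space Ω, ∫_Ω f(x) g(x) dx ≤ ∫_0^{|Ω|} f*(s) g*(s) ds, where f* and g* denote the decreasing rearrangements of f and g. -/

import Mathlib

open MeasureTheory

/-- The distribution function `μ_h(t) = |{x : h x > t}|`. -/
noncomputable def distribFn {Ω : Type*} [MeasurableSpace Ω] (μ : Measure Ω)
    (h : Ω → ℝ) (t : ℝ) : ENNReal := μ {x | t < h x}

/-- The decreasing rearrangement `h*(s) = inf {t ≥ 0 : μ_h(t) < s}`. -/
noncomputable def decRearr {Ω : Type*} [MeasurableSpace Ω] (μ : Measure Ω)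
    (h : Ω → ℝ) (s : ℝ) : ℝ :=
  sInf {t : ℝ | 0 ≤ t ∧ distribFn μ h t < ENNReal.ofReal s}

/-! By the layer-cake formula, `∫ f g = ∫∫_{t,u>0} |{f > t, g > u}| dt du`, and likewise for
`f*, g*` on `(0, |Ω|)`. A set `{f > t, g > u}` of measure `c` has `c ≤ |{f > t}|` and
`c ≤ |{g > u}|`, which forces `f* > t` and `g* > u` on all of `(0, c)`; so the integrand for
`f, g` is pointwise at most the one for `f*, g*`. -/

open Set Filter Topology

lemma lintegral_ofReal_mul_ofReal_eq_lintegral_measure_lt {α : Type*} [MeasurableSpace α]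
    (ν : Measure α) [SFinite ν] {F G : α → ℝ} (hF : Measurable F) (hG : Measurable G) :
    ∫⁻ x, ENNReal.ofReal (F x) * ENNReal.ofReal (G x) ∂ν =
      ∫⁻ p in Ioi (0 : ℝ) ×ˢ Ioi (0 : ℝ), ν {x | p.1 < F x ∧ p.2 < G x} := by
  set Q := Ioi (0 : ℝ) ×ˢ Ioi (0 : ℝ)
  set T := {q : (ℝ × ℝ) × α | q.1.1 < F q.2 ∧ q.1.2 < G q.2}
  have hT : MeasurableSet T :=
    (measurableSet_lt measurable_fst.fst (hF.comp measurable_snd)).inter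
      (measurableSet_lt measurable_fst.snd (hG.comp measurable_snd))
  have hslice (x : α) : ENNReal.ofReal (F x) * ENNReal.ofReal (G x) =
      volume.restrict Q ((fun p => (p, x)) ⁻¹' T) := by
    have hrect : ((fun p => (p, x)) ⁻¹' T) ∩ Q = Ioo 0 (F x) ×ˢ Ioo 0 (G x) := by
      ext p
      simp only [T, Q, mem_inter_iff, mem_preimage, mem_ofPred_eq, mem_prod, mem_Ioi, mem_Ioo]
      tauto
    rw [Measure.restrict_apply' (measurableSet_Ioi.prod measurableSet_Ioi), hrect,
      Measure.volume_eq_prod, Measure.prod_prod, Real.volume_Ioo, Real.volume_Ioo, sub_zero,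
      sub_zero]
  calc ∫⁻ x, ENNReal.ofReal (F x) * ENNReal.ofReal (G x) ∂ν
      = ∫⁻ x, volume.restrict Q ((fun p => (p, x)) ⁻¹' T) ∂ν := lintegral_congr hslice
    _ = (volume.restrict Q).prod ν T := (Measure.prod_apply_symm hT).symm
    _ = ∫⁻ p in Q, ν {x | p.1 < F x ∧ p.2 < G x} := Measure.prod_apply hT

section Rearrangement

variable {Ω : Type*} [MeasurableSpace Ω] (μ : Measure Ω)

lemma decRearr_nonneg (h : Ω → ℝ) (s : ℝ) : 0 ≤ decRearr μ h s :=
  Real.sInf_nonneg fun _ ht => ht.1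

lemma decRearr_of_nonpos (h : Ω → ℝ) {s : ℝ} (hs : s ≤ 0) : decRearr μ h s = 0 := by
  simp [decRearr, ENNReal.ofReal_eq_zero.mpr hs]

variable [IsFiniteMeasure μ] {h : Ω → ℝ}

lemma tendsto_distribFn_atTop (hm : Measurable h) : Tendsto (distribFn μ h) atTop (𝓝 0) := by
  have hempty : ⋂ t : ℝ, {x | t < h x} = ∅ :=
    eq_empty_of_forall_notMem fun x hx => lt_irrefl (h x) (mem_iInter.mp hx (h x))
  have := tendsto_measure_iInter_atTop (μ := μ) (s := fun t => {x | t < h x})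
    (fun t => (hm measurableSet_Ioi).nullMeasurableSet) (fun _ _ hts _ hx => hts.trans_lt hx)
    ⟨0, measure_ne_top μ _⟩
  rwa [hempty, measure_empty] at this

lemma exists_nonneg_distribFn_lt (hm : Measurable h) {c : ENNReal} (hc : 0 < c) :
    ∃ t, 0 ≤ t ∧ distribFn μ h t < c :=
  ((eventually_ge_atTop 0).and ((tendsto_distribFn_atTop μ hm).eventually_lt_const hc)).exists

lemma decRearr_antitoneOn (hm : Measurable h) : AntitoneOn (decRearr μ h) (Ioi 0) :=
  fun _ hs₁ _ _ hs => csInf_le_csInf ⟨0, fun _ ht => ht.1⟩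
    (exists_nonneg_distribFn_lt μ hm (ENNReal.ofReal_pos.mpr hs₁))
    fun _ ht => ⟨ht.1, ht.2.trans_le (ENNReal.ofReal_le_ofReal hs)⟩

lemma lt_decRearr_of_lt_distribFn (hm : Measurable h) {s t : ℝ} (hs : 0 < s)
    (hlt : ENNReal.ofReal s < distribFn μ h t) : t < decRearr μ h s := by
  -- right-continuity of `distribFn μ h` at `t`, along `t + 1/(n+1)`
  have hunion : ⋃ n : ℕ, {x | t + 1 / ((n : ℝ) + 1) ≤ h x} = {x | t < h x} := by
    change ⋃ n : ℕ, h ⁻¹' Ici _ = h ⁻¹' Ioi t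
    rw [← preimage_iUnion, iUnion_Ici_eq_Ioi_of_lt_of_tendsto (F := atTop)
      (fun n => lt_add_of_pos_right t (by positivity))
      (by simpa using tendsto_one_div_add_atTop_nhds_zero_nat.const_add t)]
  have hmono : Monotone fun n : ℕ => {x | t + 1 / ((n : ℝ) + 1) ≤ h x} := fun a b hab x hx =>
    le_trans (by gcongr : t + 1 / ((b : ℝ) + 1) ≤ t + 1 / ((a : ℝ) + 1)) hx
  rw [distribFn, ← hunion, hmono.measure_iUnion] at hlt
  obtain ⟨n, hn⟩ := lt_iSup_iff.mp hlt
  calc t < t + 1 / ((n : ℝ) + 1) := lt_add_of_pos_right t (by positivity)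
    _ ≤ decRearr μ h s :=
      le_csInf (exists_nonneg_distribFn_lt μ hm (ENNReal.ofReal_pos.mpr hs)) fun r hr => ?_
  by_contra! hr'
  exact hr.2.not_ge (hn.le.trans (measure_mono fun x hx => hr'.trans_le hx))

lemma measurable_decRearr (hm : Measurable h) : Measurable (decRearr μ h) := by
  refine measurable_of_Ioi fun t => ?_
  rcases lt_or_ge t 0 with ht | ht
  · convert MeasurableSet.univ
    exact eq_univ_of_forall fun s => ht.trans_le (decRearr_nonneg μ h s)
  refine OrdConnected.measurableSet ⟨fun a ha b hb c hc => ?_⟩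
  have ha0 : 0 < a := by
    by_contra! ha0
    exact ht.not_gt (by simpa [decRearr_of_nonpos μ h ha0] using ha)
  have hc0 : 0 < c := ha0.trans_le hc.1
  exact hb.trans_le (decRearr_antitoneOn μ hm hc0 (hc0.trans_le hc.2) hc.2)

variable {f g : Ω → ℝ}

lemma measure_lt_and_lt_le_volume_decRearr (hf : Measurable f) (hg : Measurable g) (t u : ℝ) :
    μ {x | t < f x ∧ u < g x} ≤ volume.restrict (Ioo 0 (μ univ).toReal)
      {s | t < decRearr μ f s ∧ u < decRearr μ g s} := by
  set c := μ {x | t < f x ∧ u < g x}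
  have hc : c ≠ ⊤ := measure_ne_top μ _
  have hcM : c.toReal ≤ (μ univ).toReal :=
    ENNReal.toReal_mono (measure_ne_top μ _) (measure_mono (subset_univ _))
  have hsub : Ioo 0 c.toReal ⊆ {s | t < decRearr μ f s ∧ u < decRearr μ g s} ∩
      Ioo 0 (μ univ).toReal := by
    intro s ⟨hs0, hsc⟩
    have hs : ENNReal.ofReal s < c := (ENNReal.ofReal_lt_iff_lt_toReal hs0.le hc).mpr hsc
    exact ⟨⟨lt_decRearr_of_lt_distribFn μ hf hs0 (hs.trans_le (measure_mono fun _ hx => hx.1)),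
      lt_decRearr_of_lt_distribFn μ hg hs0 (hs.trans_le (measure_mono fun _ hx => hx.2))⟩,
      hs0, hsc.trans_le hcM⟩
  calc c = volume (Ioo 0 c.toReal) := by rw [Real.volume_Ioo, sub_zero, ENNReal.ofReal_toReal hc]
    _ ≤ _ := (measure_mono hsub).trans_eq (Measure.restrict_apply' measurableSet_Ioo).symm

end Rearrangement

theorem hardy_littlewood_general {Ω : Type*} [MeasurableSpace Ω] (μ : Measure Ω)
    [IsFiniteMeasure μ] (f g : Ω → ℝ) (hf0 : ∀ x, 0 ≤ f x)
    (hfm : Measurable f) (hgm : Measurable g) :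
    ∫⁻ x, ENNReal.ofReal (f x * g x) ∂μ ≤
      ∫⁻ s in Set.Ioo (0:ℝ) (μ Set.univ).toReal,
        ENNReal.ofReal (decRearr μ f s * decRearr μ g s) := by
  simp_rw [ENNReal.ofReal_mul (hf0 _), ENNReal.ofReal_mul (decRearr_nonneg μ f _),
    lintegral_ofReal_mul_ofReal_eq_lintegral_measure_lt μ hfm hgm,
    lintegral_ofReal_mul_ofReal_eq_lintegral_measure_lt _ (measurable_decRearr μ hfm)
      (measurable_decRearr μ hgm)]
  exact lintegral_mono fun p => measure_lt_and_lt_le_volume_decRearr μ hfm hgm p.1 p.2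

/-- The Hardy–Littlewood inequality:
`∫_Ω f g ≤ ∫_0^{|Ω|} f*(s) g*(s) ds`. -/
theorem hardy_littlewood {Ω : Type*} [MeasurableSpace Ω] (μ : Measure Ω)
    [IsFiniteMeasure μ] (f g : Ω → ℝ) (hf0 : ∀ x, 0 ≤ f x) (hg0 : ∀ x, 0 ≤ g x)
    (hfm : Measurable f) (hgm : Measurable g) :
    ∫⁻ x, ENNReal.ofReal (f x * g x) ∂μ ≤
      ∫⁻ s in Set.Ioo (0:ℝ) (μ Set.univ).toReal,
        ENNReal.ofReal (decRearr μ f s * decRearr μ g s) :=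
  hardy_littlewood_general μ f g hf0 hfm hgm
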